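/- There exists an absolute constant C > 0 such that the following holds. Let J be any probability distribution on [0,1] × {0,1}, let ε, δ ∈ (0, 1/3), and let T be a positive integer with T > C ε^{−2} log(1/δ). Let (v_1,y_1),…,(v_T,y_T) be drawn i.i.d. from J and let J_S denote the uniform (empirical) distribution on these T points. Then with probability at least 1 − δ over the sample, |ℓ1-ATB(J_S) − ℓ1-ATB(J)| ≤ ε and |ATB(J_S) − ATB(J)| ≤ ε. -/

import Mathlib

open MeasureTheory Finset
open scoped ENNReal

noncomputable section

/-- Bias of the lower bin `{v < q}` under a distribution `mu` of prediction-state pairs. -/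
def binNeg (mu : Measure (ℝ × ℝ)) (q : ℝ) : ℝ :=
  ∫ x, (x.1 - x.2) * (if x.1 < q then 1 else 0) ∂mu

/-- Bias of the upper bin `{v ≥ q}` under a distribution `mu` of prediction-state pairs. -/
def binPos (mu : Measure (ℝ × ℝ)) (q : ℝ) : ℝ :=
  ∫ x, (x.1 - x.2) * (if q ≤ x.1 then 1 else 0) ∂mu

/-- Averaged two-bin calibration error of a prediction-state distribution. -/
def ATB (mu : Measure (ℝ × ℝ)) : ℝ :=
  ∫ q in (0:ℝ)..1, ((binNeg mu q)^2 + (binPos mu q)^2)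

/-- ℓ1 variant of the averaged two-bin calibration error of a distribution. -/
def l1ATB (mu : Measure (ℝ × ℝ)) : ℝ :=
  ∫ q in (0:ℝ)..1, (|binNeg mu q| + |binPos mu q|)

/-- The empirical (uniform) distribution of a sample of `T` points. -/
def empMeasure {T : ℕ} (s : Fin T → ℝ × ℝ) : Measure (ℝ × ℝ) :=
  (T : ℝ≥0∞)⁻¹ • ∑ t : Fin T, Measure.dirac (s t)

/-!
Both ℓ1-ATB and ATB are Lipschitz (with constants 1 and 2) in the pair of bias curves
`q ↦ (binNeg J q, binPos J q)` for the `L¹(dq)` distance `binDist`, because all biases lie in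
`[-1, 1]`. For fixed `q` the empirical biases are means of `T` i.i.d. variables with values in
`[-1, 1]`, hence sub-Gaussian with variance proxy `1/T` (Hoeffding's lemma), so
`E exp (l * deviation at q) ≤ 2 exp (2 l² / T)`. Jensen's inequality for `exp` moves the average
over `q` outside, `exp (l * ∫ dev dq) ≤ ∫ exp (l * dev) dq`, and Fubini and Markov then give
`P (binDist ≥ a) ≤ 2 exp (-a² T / 8)` without any union bound over thresholds.
-/

open ProbabilityTheory Real

lemma exp_mul_abs_le_exp_mul_add_exp_neg_mul (t x : ℝ) :
    exp (t * |x|) ≤ exp (t * x) + exp (-t * x) := by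
  rcases abs_choice x with h | h <;> rw [h]
  · exact le_add_of_nonneg_right (exp_pos _).le
  · rw [mul_neg, ← neg_mul]; exact le_add_of_nonneg_left (exp_pos _).le

lemma exp_mul_add_le_avg_exp_two_mul (l a b : ℝ) :
    exp (l * (a + b)) ≤ (exp (2 * l * a) + exp (2 * l * b)) / 2 := by
  have hsq : ∀ z, exp (2 * l * z) = exp (l * z) ^ 2 := fun z ↦ by rw [← exp_nat_mul]; ring_nf
  rw [mul_add, exp_add, hsq, hsq]
  nlinarith [sq_nonneg (exp (l * a) - exp (l * b))]

lemma intervalIntegrable_of_abs_le {f : ℝ → ℝ} (hf : Measurable f) {C : ℝ}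
    (h : ∀ q, |f q| ≤ C) (a b : ℝ) : IntervalIntegrable f volume a b :=
  intervalIntegrable_const.mono_fun' hf.aestronglyMeasurable (ae_of_all _ h)

lemma abs_intervalIntegral_sub_le {f g F : ℝ → ℝ} {a b : ℝ} (hab : a ≤ b)
    (hf : IntervalIntegrable f volume a b) (hg : IntervalIntegrable g volume a b)
    (hF : IntervalIntegrable F volume a b) (h : ∀ q, |f q - g q| ≤ F q) :
    |(∫ q in a..b, f q) - ∫ q in a..b, g q| ≤ ∫ q in a..b, F q := by
  rw [← intervalIntegral.integral_sub hf hg]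
  exact (intervalIntegral.abs_integral_le_integral_abs hab).trans
    (intervalIntegral.integral_mono_on hab (hf.sub hg).abs hF fun q _ ↦ h q)

lemma abs_abs_add_abs_sub_le (a b c d : ℝ) :
    |(|a| + |b|) - (|c| + |d|)| ≤ |a - c| + |b - d| :=
  calc |(|a| + |b|) - (|c| + |d|)| = |(|a| - |c|) + (|b| - |d|)| := by ring_nf
    _ ≤ |a - c| + |b - d| :=
      (abs_add_le _ _).trans (add_le_add (abs_abs_sub_abs_le_abs_sub a c)
        (abs_abs_sub_abs_le_abs_sub b d))

lemma abs_sq_sub_sq_le {a b : ℝ} (ha : |a| ≤ 1) (hb : |b| ≤ 1) :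
    |a ^ 2 - b ^ 2| ≤ 2 * |a - b| :=
  calc |a ^ 2 - b ^ 2| = |a - b| * |a + b| := by rw [← abs_mul]; ring_nf
    _ ≤ |a - b| * 2 := by gcongr; exact (abs_add_le a b).trans (by linarith)
    _ = 2 * |a - b| := mul_comm _ _

namespace ProbabilityTheory.HasSubgaussianMGF

variable {Ω : Type*} [MeasurableSpace Ω] {μ : Measure Ω} {X Y : Ω → ℝ} {c : NNReal}

lemma integrable_exp_mul_abs (h : HasSubgaussianMGF X c μ) (t : ℝ) :
    Integrable (fun ω ↦ exp (t * |X ω|)) μ := by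
  refine ((h.integrable_exp_mul t).add (h.integrable_exp_mul (-t))).mono' ?_ ?_
  · exact continuous_exp.comp_aestronglyMeasurable (h.aestronglyMeasurable.norm.const_mul t)
  · filter_upwards with ω
    rw [norm_of_nonneg (exp_pos _).le]
    exact exp_mul_abs_le_exp_mul_add_exp_neg_mul t (X ω)

lemma integral_exp_mul_abs_le (h : HasSubgaussianMGF X c μ) (t : ℝ) :
    ∫ ω, exp (t * |X ω|) ∂μ ≤ 2 * exp (c * t ^ 2 / 2) := calc
  ∫ ω, exp (t * |X ω|) ∂μ ≤ ∫ ω, (exp (t * X ω) + exp (-t * X ω)) ∂μ :=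
    integral_mono (h.integrable_exp_mul_abs t)
      ((h.integrable_exp_mul t).add (h.integrable_exp_mul (-t)))
      fun ω ↦ exp_mul_abs_le_exp_mul_add_exp_neg_mul _ _
  _ = mgf X μ t + mgf X μ (-t) := integral_add (h.integrable_exp_mul t) (h.integrable_exp_mul _)
  _ ≤ exp (c * t ^ 2 / 2) + exp (c * (-t) ^ 2 / 2) := add_le_add (h.mgf_le t) (h.mgf_le (-t))
  _ = 2 * exp (c * t ^ 2 / 2) := by rw [neg_sq]; ring

lemma integral_exp_mul_abs_add_abs_le (hX : HasSubgaussianMGF X c μ)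
    (hY : HasSubgaussianMGF Y c μ) (l : ℝ) :
    ∫ ω, exp (l * (|X ω| + |Y ω|)) ∂μ ≤ 2 * exp (2 * c * l ^ 2) := by
  have hint := ((hX.integrable_exp_mul_abs (2 * l)).add
    (hY.integrable_exp_mul_abs (2 * l))).div_const 2
  calc ∫ ω, exp (l * (|X ω| + |Y ω|)) ∂μ
      ≤ ∫ ω, (exp (2 * l * |X ω|) + exp (2 * l * |Y ω|)) / 2 ∂μ := by
        refine integral_mono_of_nonneg (ae_of_all _ fun ω ↦ (exp_pos _).le) hint
          (ae_of_all _ fun ω ↦ exp_mul_add_le_avg_exp_two_mul l _ _)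
    _ = ((∫ ω, exp (2 * l * |X ω|) ∂μ) + ∫ ω, exp (2 * l * |Y ω|) ∂μ) / 2 := by
        rw [integral_div, integral_add (hX.integrable_exp_mul_abs _) (hY.integrable_exp_mul_abs _)]
    _ ≤ (2 * exp (c * (2 * l) ^ 2 / 2) + 2 * exp (c * (2 * l) ^ 2 / 2)) / 2 := by
        gcongr
        exacts [hX.integral_exp_mul_abs_le _, hY.integral_exp_mul_abs_le _]
    _ = 2 * exp (2 * c * l ^ 2) := by ring_nf

end ProbabilityTheory.HasSubgaussianMGF

lemma hasSubgaussianMGF_empiricalMean_sub {α : Type*} [MeasurableSpace α] {μ : Measure α}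
    [IsProbabilityMeasure μ] {g : α → ℝ} (hg : Measurable g) {a b : ℝ}
    (hab : ∀ᵐ x ∂μ, g x ∈ Set.Icc a b) {T : ℕ} (hT : T ≠ 0) :
    HasSubgaussianMGF (fun s : Fin T → α ↦ (T : ℝ)⁻¹ * ∑ t, g (s t) - μ[g])
      ((‖b - a‖₊ / 2) ^ 2 / T) (Measure.pi fun _ ↦ μ) := by
  have hcoord (t : Fin T) : HasSubgaussianMGF (fun s : Fin T → α ↦ g (s t) - μ[g])
      ((‖b - a‖₊ / 2) ^ 2) (Measure.pi fun _ ↦ μ) := by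
    refine HasSubgaussianMGF.of_map (X := fun x ↦ g x - μ[g]) (Y := fun s : Fin T → α ↦ s t)
      (measurable_pi_apply t).aemeasurable ?_
    rw [(measurePreserving_eval (fun _ ↦ μ) t).map_eq]
    exact hasSubgaussianMGF_of_mem_Icc hg.aemeasurable hab
  have hsum := (HasSubgaussianMGF.sum_of_iIndepFun
    (iIndepFun_pi (X := fun _ x ↦ g x - μ[g]) fun _ ↦ (hg.sub_const _).aemeasurable)
    (s := Finset.univ) fun t _ ↦ hcoord t).const_mul (T : ℝ)⁻¹
  have hTR : (T : ℝ) ≠ 0 := Nat.cast_ne_zero.mpr hT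
  convert hsum using 1
  · ext s
    rw [Finset.sum_sub_distrib, Finset.sum_const, Finset.card_univ, Fintype.card_fin, nsmul_eq_mul,
      mul_sub, inv_mul_cancel_left₀ hTR]
  · rw [Finset.sum_const, Finset.card_univ, Fintype.card_fin, nsmul_eq_mul]
    change _ = (T : NNReal)⁻¹ ^ 2 * (T * _)
    field_simp

lemma ae_forall_apply_pi {α : Type*} [MeasurableSpace α] {μ : Measure α}
    [IsProbabilityMeasure μ] {T : ℕ} {p : α → Prop} (hp : ∀ᵐ x ∂μ, p x) :
    ∀ᵐ s ∂(Measure.pi fun _ : Fin T ↦ μ), ∀ t, p (s t) :=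
  ae_all_iff.mpr fun t ↦ (measurePreserving_eval (fun _ ↦ μ) t).quasiMeasurePreserving.ae hp

lemma one_sub_le_measure_of_compl_ae_le {α : Type*} [MeasurableSpace α] {μ : Measure α}
    [IsProbabilityMeasure μ] {s t : Set α} (h : sᶜ ≤ᵐ[μ] t) : 1 - μ t ≤ μ s := by
  rw [tsub_le_iff_right]
  calc 1 = μ (s ∪ sᶜ) := by rw [Set.union_compl_self, measure_univ]
    _ ≤ μ s + μ sᶜ := measure_union_le s sᶜ
    _ ≤ μ s + μ t := add_le_add le_rfl (measure_mono_ae h)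

lemma measureReal_le_integral_le_of_integral_exp_le {β Ω : Type*} [MeasurableSpace β]
    [MeasurableSpace Ω] {ν : Measure β} [IsProbabilityMeasure ν] {μ : Measure Ω}
    [IsProbabilityMeasure μ] {h : β → Ω → ℝ} (hm : Measurable (Function.uncurry h)) {B : ℝ}
    (hB : ∀ᵐ ω ∂μ, ∀ q, |h q ω| ≤ B) {l K : ℝ} (hl : 0 ≤ l)
    (hK : ∀ q, ∫ ω, exp (l * h q ω) ∂μ ≤ K) (a : ℝ) :
    μ.real {ω | a ≤ ∫ q, h q ω ∂ν} ≤ K * exp (-(l * a)) := by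
  have hexp_le {q ω} (hq : |h q ω| ≤ B) : ‖exp (l * h q ω)‖ ≤ exp (l * B) := by
    rw [norm_of_nonneg (exp_pos _).le, exp_le_exp]
    exact mul_le_mul_of_nonneg_left ((le_abs_self _).trans hq) hl
  have hmeas : Measurable fun p : β × Ω ↦ exp (l * h p.1 p.2) := by fun_prop
  have hint : Integrable (fun p : β × Ω ↦ exp (l * h p.1 p.2)) (ν.prod μ) := by
    refine Integrable.of_bound hmeas.aestronglyMeasurable (exp (l * B)) ?_
    filter_upwards [(measurePreserving_snd (μ := ν) (ν := μ)).quasiMeasurePreserving.ae hB]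
      with p hp
    exact hexp_le (hp p.1)
  set Y : Ω → ℝ := fun ω ↦ ∫ q, exp (l * h q ω) ∂ν
  have hjensen : ∀ᵐ ω ∂μ, exp (l * ∫ q, h q ω ∂ν) ≤ Y ω := by
    filter_upwards [hB] with ω hω
    have hsec : Measurable fun q ↦ h q ω := hm.comp (measurable_id.prodMk measurable_const)
    have hint_h : Integrable (fun q ↦ l * h q ω) ν :=
      (Integrable.of_bound hsec.aestronglyMeasurable B (ae_of_all _ hω)).const_mul l
    have hint_exp : Integrable (fun q ↦ exp (l * h q ω)) ν :=
      Integrable.of_bound (by fun_prop) (exp (l * B)) (ae_of_all _ fun q ↦ hexp_le (hω q))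
    simpa [integral_const_mul] using convexOn_exp.map_integral_le continuous_exp.continuousOn
      isClosed_univ (ae_of_all _ fun _ ↦ Set.mem_univ _) hint_h hint_exp
  have hY : ∫ ω, Y ω ∂μ ≤ K := by
    rw [← integral_integral_swap (f := fun q ω ↦ exp (l * h q ω)) hint]
    exact (integral_mono hint.integral_prod_left (integrable_const K) hK).trans (by simp)
  have hmarkov := mul_meas_ge_le_integral_of_nonneg
    (ae_of_all _ fun ω ↦ integral_nonneg fun q ↦ (exp_pos _).le) hint.integral_prod_right
    (exp (l * a))
  calc μ.real {ω | a ≤ ∫ q, h q ω ∂ν} ≤ μ.real {ω | exp (l * a) ≤ Y ω} := by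
        refine ENNReal.toReal_mono (measure_ne_top _ _) (measure_mono_ae ?_)
        filter_upwards [hjensen] with ω hω ha
        exact (exp_le_exp.mpr (mul_le_mul_of_nonneg_left ha hl)).trans hω
    _ ≤ K * exp (-(l * a)) := by
        rw [exp_neg, ← div_eq_mul_inv, le_div_iff₀ (exp_pos _), mul_comm]
        exact hmarkov.trans hY

def binNegTerm (q : ℝ) (x : ℝ × ℝ) : ℝ := (x.1 - x.2) * (if x.1 < q then 1 else 0)

def binPosTerm (q : ℝ) (x : ℝ × ℝ) : ℝ := (x.1 - x.2) * (if q ≤ x.1 then 1 else 0)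

@[fun_prop]
lemma measurable_binNegTerm : Measurable fun p : ℝ × (ℝ × ℝ) ↦ binNegTerm p.1 p.2 :=
  (by fun_prop : Measurable fun p : ℝ × (ℝ × ℝ) ↦ p.2.1 - p.2.2).mul
    (Measurable.ite (measurableSet_lt (by fun_prop) (by fun_prop)) measurable_const
      measurable_const)

@[fun_prop]
lemma measurable_binPosTerm : Measurable fun p : ℝ × (ℝ × ℝ) ↦ binPosTerm p.1 p.2 :=
  (by fun_prop : Measurable fun p : ℝ × (ℝ × ℝ) ↦ p.2.1 - p.2.2).mul
    (Measurable.ite (measurableSet_le (by fun_prop) (by fun_prop)) measurable_const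
      measurable_const)

lemma abs_binNegTerm_le (q : ℝ) (x : ℝ × ℝ) : |binNegTerm q x| ≤ |x.1 - x.2| := by
  unfold binNegTerm; split_ifs <;> simp

lemma abs_binPosTerm_le (q : ℝ) (x : ℝ × ℝ) : |binPosTerm q x| ≤ |x.1 - x.2| := by
  unfold binPosTerm; split_ifs <;> simp

lemma integral_empMeasure {T : ℕ} (s : Fin T → ℝ × ℝ) (f : ℝ × ℝ → ℝ) :
    ∫ x, f x ∂empMeasure s = (T : ℝ)⁻¹ * ∑ t, f (s t) := by
  rw [empMeasure, integral_smul_measure,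
    integral_finsetSum_measure fun t _ ↦ integrable_dirac enorm_lt_top]
  simp [integral_dirac, ENNReal.toReal_inv]

lemma isProbabilityMeasure_empMeasure {T : ℕ} (hT : T ≠ 0) (s : Fin T → ℝ × ℝ) :
    IsProbabilityMeasure (empMeasure s) := by
  constructor
  simp [empMeasure, ENNReal.inv_mul_cancel (Nat.cast_ne_zero.mpr hT) (ENNReal.natCast_ne_top T)]

lemma ae_empMeasure {T : ℕ} {s : Fin T → ℝ × ℝ} {p : ℝ × ℝ → Prop} (hp : ∀ t, p (s t)) :
    ∀ᵐ x ∂empMeasure s, p x := by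
  simp [ae_iff, empMeasure, Measure.dirac_apply, hp]

lemma binNeg_empMeasure {T : ℕ} (s : Fin T → ℝ × ℝ) (q : ℝ) :
    binNeg (empMeasure s) q = (T : ℝ)⁻¹ * ∑ t, binNegTerm q (s t) :=
  integral_empMeasure s _

lemma binPos_empMeasure {T : ℕ} (s : Fin T → ℝ × ℝ) (q : ℝ) :
    binPos (empMeasure s) q = (T : ℝ)⁻¹ * ∑ t, binPosTerm q (s t) :=
  integral_empMeasure s _

lemma abs_binNeg_le_one {ρ : Measure (ℝ × ℝ)} [IsProbabilityMeasure ρ]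
    (hρ : ∀ᵐ x ∂ρ, |x.1 - x.2| ≤ 1) (q : ℝ) : |binNeg ρ q| ≤ 1 := by
  show |∫ x, binNegTerm q x ∂ρ| ≤ 1
  simpa using norm_integral_le_of_norm_le_const (f := binNegTerm q)
    (hρ.mono fun x hx ↦ (abs_binNegTerm_le q x).trans hx)

lemma abs_binPos_le_one {ρ : Measure (ℝ × ℝ)} [IsProbabilityMeasure ρ]
    (hρ : ∀ᵐ x ∂ρ, |x.1 - x.2| ≤ 1) (q : ℝ) : |binPos ρ q| ≤ 1 := by
  show |∫ x, binPosTerm q x ∂ρ| ≤ 1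
  simpa using norm_integral_le_of_norm_le_const (f := binPosTerm q)
    (hρ.mono fun x hx ↦ (abs_binPosTerm_le q x).trans hx)

@[fun_prop]
lemma measurable_binNeg (ρ : Measure (ℝ × ℝ)) [SFinite ρ] : Measurable (binNeg ρ) :=
  measurable_binNegTerm.stronglyMeasurable.integral_prod_right'.measurable

@[fun_prop]
lemma measurable_binPos (ρ : Measure (ℝ × ℝ)) [SFinite ρ] : Measurable (binPos ρ) :=
  measurable_binPosTerm.stronglyMeasurable.integral_prod_right'.measurable

def binGap (ρ ρ' : Measure (ℝ × ℝ)) (q : ℝ) : ℝ :=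
  |binNeg ρ q - binNeg ρ' q| + |binPos ρ q - binPos ρ' q|

def binDist (ρ ρ' : Measure (ℝ × ℝ)) : ℝ := ∫ q in (0:ℝ)..1, binGap ρ ρ' q

section binDist

variable {ρ ρ' : Measure (ℝ × ℝ)} [IsProbabilityMeasure ρ] [IsProbabilityMeasure ρ']

lemma intervalIntegrable_binNeg (hρ : ∀ᵐ x ∂ρ, |x.1 - x.2| ≤ 1) (a b : ℝ) :
    IntervalIntegrable (binNeg ρ) volume a b :=
  intervalIntegrable_of_abs_le (measurable_binNeg ρ) (abs_binNeg_le_one hρ) a b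

lemma intervalIntegrable_binPos (hρ : ∀ᵐ x ∂ρ, |x.1 - x.2| ≤ 1) (a b : ℝ) :
    IntervalIntegrable (binPos ρ) volume a b :=
  intervalIntegrable_of_abs_le (measurable_binPos ρ) (abs_binPos_le_one hρ) a b

lemma intervalIntegrable_binNeg_sq_add_binPos_sq (hρ : ∀ᵐ x ∂ρ, |x.1 - x.2| ≤ 1) (a b : ℝ) :
    IntervalIntegrable (fun q ↦ binNeg ρ q ^ 2 + binPos ρ q ^ 2) volume a b := by
  refine intervalIntegrable_of_abs_le (by fun_prop) (C := 2) (fun q ↦ ?_) a b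
  have := abs_binNeg_le_one hρ q
  have := abs_binPos_le_one hρ q
  rw [abs_of_nonneg (by positivity), ← sq_abs (binNeg ρ q), ← sq_abs (binPos ρ q)]
  nlinarith [abs_nonneg (binNeg ρ q), abs_nonneg (binPos ρ q)]

lemma abs_l1ATB_sub_le (hρ : ∀ᵐ x ∂ρ, |x.1 - x.2| ≤ 1) (hρ' : ∀ᵐ x ∂ρ', |x.1 - x.2| ≤ 1) :
    |l1ATB ρ - l1ATB ρ'| ≤ binDist ρ ρ' := by
  have hN := intervalIntegrable_binNeg hρ 0 1
  have hP := intervalIntegrable_binPos hρ 0 1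
  have hN' := intervalIntegrable_binNeg hρ' 0 1
  have hP' := intervalIntegrable_binPos hρ' 0 1
  exact abs_intervalIntegral_sub_le zero_le_one (hN.abs.add hP.abs) (hN'.abs.add hP'.abs)
    ((hN.sub hN').abs.add (hP.sub hP').abs) fun q ↦ abs_abs_add_abs_sub_le _ _ _ _

lemma abs_ATB_sub_le (hρ : ∀ᵐ x ∂ρ, |x.1 - x.2| ≤ 1) (hρ' : ∀ᵐ x ∂ρ', |x.1 - x.2| ≤ 1) :
    |ATB ρ - ATB ρ'| ≤ 2 * binDist ρ ρ' := by
  have hN := intervalIntegrable_binNeg hρ 0 1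
  have hP := intervalIntegrable_binPos hρ 0 1
  have hN' := intervalIntegrable_binNeg hρ' 0 1
  have hP' := intervalIntegrable_binPos hρ' 0 1
  rw [binDist, ← intervalIntegral.integral_const_mul]
  refine abs_intervalIntegral_sub_le zero_le_one
    (intervalIntegrable_binNeg_sq_add_binPos_sq hρ 0 1)
    (intervalIntegrable_binNeg_sq_add_binPos_sq hρ' 0 1)
    (((hN.sub hN').abs.add (hP.sub hP').abs).const_mul 2) fun q ↦ ?_
  have := abs_sq_sub_sq_le (abs_binNeg_le_one hρ q) (abs_binNeg_le_one hρ' q)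
  have := abs_sq_sub_sq_le (abs_binPos_le_one hρ q) (abs_binPos_le_one hρ' q)
  calc _ = |(binNeg ρ q ^ 2 - binNeg ρ' q ^ 2) + (binPos ρ q ^ 2 - binPos ρ' q ^ 2)| := by
        ring_nf
    _ ≤ _ := (abs_add_le _ _).trans (by rw [binGap]; linarith)

end binDist

instance : IsProbabilityMeasure (volume.restrict (Set.Ioc (0:ℝ) 1)) := ⟨by simp⟩

section Concentration

variable {mu : Measure (ℝ × ℝ)} [IsProbabilityMeasure mu] {T : ℕ}

lemma measurable_binGap_empMeasure :
    Measurable fun p : ℝ × (Fin T → ℝ × ℝ) ↦ binGap (empMeasure p.2) mu p.1 := by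
  simp only [binGap, binNeg_empMeasure, binPos_empMeasure]
  fun_prop

lemma binGap_le_four {ρ : Measure (ℝ × ℝ)} [IsProbabilityMeasure ρ]
    (hρ : ∀ᵐ x ∂ρ, |x.1 - x.2| ≤ 1) (hmu : ∀ᵐ x ∂mu, |x.1 - x.2| ≤ 1) (q : ℝ) :
    |binGap ρ mu q| ≤ 4 := by
  have := abs_binNeg_le_one hρ q
  have := abs_binPos_le_one hρ q
  have := abs_binNeg_le_one hmu q
  have := abs_binPos_le_one hmu q
  rw [binGap, abs_of_nonneg (by positivity)]
  linarith [abs_sub (binNeg ρ q) (binNeg mu q), abs_sub (binPos ρ q) (binPos mu q)]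

lemma integral_exp_mul_binGap_empMeasure_le (hmu : ∀ᵐ x ∂mu, |x.1 - x.2| ≤ 1) (hT : T ≠ 0)
    (l q : ℝ) :
    ∫ s, exp (l * binGap (empMeasure s) mu q) ∂(Measure.pi fun _ : Fin T ↦ mu)
      ≤ 2 * exp (2 * l ^ 2 / T) := by
  have hIcc {g : ℝ × ℝ → ℝ} (hg : ∀ x, |g x| ≤ |x.1 - x.2|) :
      ∀ᵐ x ∂mu, g x ∈ Set.Icc (-1) 1 :=
    hmu.mono fun x hx ↦ abs_le.mp ((hg x).trans hx)
  have := HasSubgaussianMGF.integral_exp_mul_abs_add_abs_le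
    (hasSubgaussianMGF_empiricalMean_sub (g := binNegTerm q)
      (measurable_binNegTerm.comp measurable_prodMk_left) (hIcc (abs_binNegTerm_le q)) hT)
    (hasSubgaussianMGF_empiricalMean_sub (g := binPosTerm q)
      (measurable_binPosTerm.comp measurable_prodMk_left) (hIcc (abs_binPosTerm_le q)) hT) l
  convert this using 3
  · simp only [binGap, binNeg_empMeasure, binPos_empMeasure]
    rfl
  · norm_num
    ring

lemma measureReal_binDist_empMeasure_ge_le (hmu : ∀ᵐ x ∂mu, |x.1 - x.2| ≤ 1) (hT : T ≠ 0)
    {a : ℝ} (ha : 0 ≤ a) :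
    (Measure.pi fun _ : Fin T ↦ mu).real {s | a ≤ binDist (empMeasure s) mu}
      ≤ 2 * exp (-(a ^ 2 * T / 8)) := by
  have hB : ∀ᵐ s ∂(Measure.pi fun _ : Fin T ↦ mu), ∀ q, |binGap (empMeasure s) mu q| ≤ 4 := by
    filter_upwards [ae_forall_apply_pi hmu] with s hs
    have := isProbabilityMeasure_empMeasure hT s
    exact binGap_le_four (ae_empMeasure hs) hmu
  have hchernoff := measureReal_le_integral_le_of_integral_exp_le
    (ν := volume.restrict (Set.Ioc 0 1)) measurable_binGap_empMeasure hB
    (by positivity : 0 ≤ a * T / 4) (integral_exp_mul_binGap_empMeasure_le hmu hT _) a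
  simp_rw [binDist, intervalIntegral.integral_of_le zero_le_one]
  refine hchernoff.trans (le_of_eq ?_)
  rw [mul_assoc, ← exp_add]
  congr 2
  field_simp
  ring

lemma one_sub_le_measure_ATB_close (hmu : ∀ᵐ x ∂mu, |x.1 - x.2| ≤ 1) (hT : T ≠ 0) {ε : ℝ}
    (hε : 0 ≤ ε) :
    1 - ENNReal.ofReal (2 * exp (-((ε / 2) ^ 2 * T / 8))) ≤ Measure.pi (fun _ : Fin T ↦ mu)
      {s | |l1ATB (empMeasure s) - l1ATB mu| ≤ ε ∧ |ATB (empMeasure s) - ATB mu| ≤ ε} := by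
  have htail : Measure.pi (fun _ : Fin T ↦ mu) {s | ε / 2 ≤ binDist (empMeasure s) mu}
      ≤ ENNReal.ofReal (2 * exp (-((ε / 2) ^ 2 * T / 8))) := by
    rw [← ofReal_measureReal]
    exact ENNReal.ofReal_le_ofReal (measureReal_binDist_empMeasure_ge_le hmu hT (by positivity))
  refine (tsub_le_tsub_left htail 1).trans (one_sub_le_measure_of_compl_ae_le ?_)
  filter_upwards [ae_forall_apply_pi hmu] with s hs hfar
  have := isProbabilityMeasure_empMeasure hT s
  by_contra hclose
  replace hclose : binDist (empMeasure s) mu < ε / 2 := not_le.mp hclose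
  exact hfar ⟨(abs_l1ATB_sub_le (ae_empMeasure hs) hmu).trans (by linarith),
    (abs_ATB_sub_le (ae_empMeasure hs) hmu).trans (by linarith)⟩

end Concentration

lemma two_mul_exp_neg_le {ε δ T : ℝ} (hε : 0 < ε) (hδ : δ ∈ Set.Ioo (0:ℝ) (1/2))
    (hT : 64 * ε⁻¹ ^ 2 * log (1 / δ) < T) : 2 * exp (-((ε / 2) ^ 2 * T / 8)) ≤ δ := by
  obtain ⟨hδ0, hδ1⟩ := hδ
  have hexp : exp (-((ε / 2) ^ 2 * T / 8)) ≤ δ ^ 2 := by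
    have : 2 * log (1 / δ) < (ε / 2) ^ 2 * T / 8 := by
      have := mul_lt_mul_of_pos_left hT (by positivity : 0 < ε ^ 2 / 32)
      field_simp at this ⊢
      linarith
    calc exp (-((ε / 2) ^ 2 * T / 8)) ≤ exp (-(2 * log (1 / δ))) := exp_le_exp.mpr (by linarith)
      _ = δ ^ 2 := by
        rw [one_div, log_inv, show -(2 * -log δ) = log δ + log δ by ring, exp_add, exp_log hδ0, sq]
  nlinarith

/-- Sample complexity of estimating ATB and ℓ1-ATB: `T = O(ε⁻² log (1/δ))` i.i.d. samples
suffice to estimate both within `ε`, with probability at least `1 - δ`. -/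
theorem atb_sample_complexity :
    ∃ C : ℝ, 0 < C ∧
      ∀ (mu : Measure (ℝ × ℝ)), IsProbabilityMeasure mu →
        (∀ᵐ x ∂mu, x.1 ∈ Set.Icc (0:ℝ) 1 ∧ (x.2 = 0 ∨ x.2 = 1)) →
        ∀ ε δ : ℝ, ε ∈ Set.Ioo (0:ℝ) (1/3) → δ ∈ Set.Ioo (0:ℝ) (1/3) →
        ∀ T : ℕ, (T : ℝ) > C * ε⁻¹ ^ 2 * Real.log (1 / δ) →
        Measure.pi (fun _ : Fin T => mu)
            {s | |l1ATB (empMeasure s) - l1ATB mu| ≤ ε ∧ |ATB (empMeasure s) - ATB mu| ≤ ε}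
          ≥ ENNReal.ofReal (1 - δ) := by
  refine ⟨64, by norm_num, fun mu _ hsupp ε δ ⟨hε0, _⟩ ⟨hδ0, hδ⟩ T hT ↦ ?_⟩
  have hmu : ∀ᵐ x ∂mu, |x.1 - x.2| ≤ 1 := by
    filter_upwards [hsupp] with x ⟨⟨h0, h1⟩, hy⟩
    rcases hy with hy | hy <;> rw [hy, abs_le] <;> constructor <;> linarith
  have hT0 : T ≠ 0 := by
    have : 0 < log (1 / δ) := log_pos (by rw [lt_div_iff₀ hδ0]; linarith)
    have : (0 : ℝ) < T := lt_trans (by positivity) hT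
    exact_mod_cast this.ne'
  calc ENNReal.ofReal (1 - δ) = 1 - ENNReal.ofReal δ := by
        rw [ENNReal.ofReal_sub _ hδ0.le, ENNReal.ofReal_one]
    _ ≤ 1 - ENNReal.ofReal (2 * exp (-((ε / 2) ^ 2 * T / 8))) :=
        tsub_le_tsub_left
          (ENNReal.ofReal_le_ofReal (two_mul_exp_neg_le hε0 ⟨hδ0, by linarith⟩ hT)) 1
    _ ≤ _ := one_sub_le_measure_ATB_close hmu hT0 hε0.le

end
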